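/- The generalized Laguerre polynomial L_n^α satisfies the Sturm–Liouville differential equation x·(L_n^α)''(x) + (α + 1 − x)·(L_n^α)'(x) + n·L_n^α(x) = 0 for all x. -/

import Mathlib

/-!
Write `L_n^α(x) = ∑ c_k x^k`. The operator `x f'' + (a - x) f' + n f` sends `x^k` to
`k (k - 1 + a) x^(k-1) + (n - k) x^k`, so for `a = α + 1` the coefficient of `x^k` in the image
is `(k + 1)(k + α + 1) c_(k+1) + (n - k) c_k`. This vanishes for `k < n` by the ratio
`C(n+α, m+1) = C(n+α, m) (n + α - m) / (m + 1)` of consecutive binomial coefficients, and for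
`k = n` because of the factor `n - k`.
-/

/-- Generalized binomial coefficient C(z, m) for real z. -/
noncomputable def genBinom (z : ℝ) (m : ℕ) : ℝ :=
  (∏ i ∈ Finset.range m, (z - i)) / m.factorial

/-- Generalized Laguerre polynomial L_n^α(x) = Σ_{k=0}^n (-1)^k C(n+α, n-k) x^k / k!. -/
noncomputable def laguerre (α : ℝ) (n : ℕ) (x : ℝ) : ℝ :=
  ∑ k ∈ Finset.range (n + 1), (-1 : ℝ) ^ k * genBinom (n + α) (n - k) * x ^ k / k.factorial

open Finset

lemma genBinom_succ (z : ℝ) (m : ℕ) :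
    genBinom z (m + 1) = genBinom z m * (z - m) / (m + 1) := by
  unfold genBinom
  rw [prod_range_succ, Nat.factorial_succ]
  push_cast
  field_simp

lemma hasDerivAt_sum_mul_pow {ι : Type*} (s : Finset ι) (c : ι → ℝ) (e : ι → ℕ) (x : ℝ) :
    HasDerivAt (fun y => ∑ i ∈ s, c i * y ^ e i) (∑ i ∈ s, c i * e i * x ^ (e i - 1)) x :=
  (HasDerivAt.fun_sum fun i _ => (hasDerivAt_pow (e i) x).const_mul (c i)).congr_deriv <|
    sum_congr rfl fun _ _ => (mul_assoc _ _ _).symm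

lemma deriv_sum_mul_pow {ι : Type*} (s : Finset ι) (c : ι → ℝ) (e : ι → ℕ) :
    deriv (fun y => ∑ i ∈ s, c i * y ^ e i) = fun x => ∑ i ∈ s, c i * e i * x ^ (e i - 1) :=
  funext fun x => (hasDerivAt_sum_mul_pow s c e x).deriv

lemma laguerre_operator_sum_mul_pow (c : ℕ → ℝ) (N : ℕ) (a n x : ℝ) :
    x * deriv (deriv fun y => ∑ k ∈ range (N + 1), c k * y ^ k) x
      + (a - x) * deriv (fun y => ∑ k ∈ range (N + 1), c k * y ^ k) x
      + n * ∑ k ∈ range (N + 1), c k * x ^ k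
      = ∑ k ∈ range N, ((k + 1) * (k + a) * c (k + 1) + (n - k) * c k) * x ^ k
        + (n - N) * c N * x ^ N := by
  -- the truncated exponents `k - 1` and `k - 1 - 1` only matter where the factor `k (k - 1)` vanishes
  have hmonomial (k : ℕ) :
      x * (c k * k * (k - 1 : ℕ) * x ^ (k - 1 - 1)) + (a - x) * (c k * k * x ^ (k - 1))
        + n * (c k * x ^ k)
      = k * (k - 1 + a) * c k * x ^ (k - 1) + (n - k) * c k * x ^ k := by
    rcases k with _ | _ | j
    · simp
    · simp only [zero_add, Nat.cast_one, tsub_self, CharP.cast_eq_zero, mul_zero, pow_zero,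
        pow_one, sub_self]
      ring
    · simp only [Nat.add_sub_cancel, pow_succ]
      push_cast
      ring
  simp only [deriv_sum_mul_pow]
  rw [mul_sum, mul_sum, mul_sum, ← sum_add_distrib, ← sum_add_distrib,
    sum_congr rfl fun k _ => hmonomial k, sum_add_distrib, sum_range_succ' _ N, sum_range_succ _ N]
  simp only [Nat.cast_zero, zero_mul, add_zero, Nat.add_sub_cancel, Nat.cast_add, Nat.cast_one,
    add_sub_cancel_right, add_mul, sum_add_distrib]
  ring

noncomputable def laguerreCoeff (α : ℝ) (n k : ℕ) : ℝ :=
  (-1) ^ k * genBinom (n + α) (n - k) / k.factorial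

lemma laguerre_eq_sum_laguerreCoeff_mul_pow (α : ℝ) (n : ℕ) :
    laguerre α n = fun x => ∑ k ∈ range (n + 1), laguerreCoeff α n k * x ^ k :=
  funext fun x => sum_congr rfl fun k _ => by unfold laguerreCoeff; ring

lemma laguerreCoeff_recurrence (α : ℝ) {n k : ℕ} (hk : k < n) :
    (k + 1) * (k + (α + 1)) * laguerreCoeff α n (k + 1) + (n - k) * laguerreCoeff α n k = 0 := by
  obtain ⟨m, rfl⟩ := Nat.exists_eq_add_of_lt hk
  have hsub : k + m + 1 - k = m + 1 := by omega
  rw [laguerreCoeff, laguerreCoeff, Nat.sub_add_eq, hsub, Nat.add_sub_cancel, genBinom_succ,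
    pow_succ, Nat.factorial_succ]
  push_cast
  field_simp
  ring

theorem laguerre_sturm_liouville_general (α : ℝ) (n : ℕ) (x : ℝ) :
    x * deriv (deriv (laguerre α n)) x + (α + 1 - x) * deriv (laguerre α n) x
      + n * laguerre α n x = 0 := by
  rw [laguerre_eq_sum_laguerreCoeff_mul_pow, laguerre_operator_sum_mul_pow, sub_self, zero_mul,
    zero_mul, add_zero]
  exact sum_eq_zero fun k hk => by rw [laguerreCoeff_recurrence α (mem_range.1 hk), zero_mul]

/-- Sturm-Liouville equation for generalized Laguerre polynomials:
x (L_n^α)''(x) + (α + 1 - x)(L_n^α)'(x) + n L_n^α(x) = 0. -/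
theorem laguerre_sturm_liouville (α : ℝ) (hα : -1 < α) (n : ℕ) (x : ℝ) :
    x * deriv (deriv (laguerre α n)) x + (α + 1 - x) * deriv (laguerre α n) x
      + n * laguerre α n x = 0 :=
  laguerre_sturm_liouville_general α n x
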